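/- For any consistent normal modal logic L, the following are equivalent: (1) for every formula φ and all finite sets P, Q of propositional variables there exists a uniform Lyndon interpolant θ of (φ,P,Q) in L with d(θ) ≤ d(φ); (2) L is sound and complete with respect to some class Cl of Kripke models that has ULIP. -/

import Mathlib

/-- Modal formulas: propositional variables, ⊥, →, □. -/
inductive Formula : Type
  | var : ℕ → Formula
  | bot : Formula
  | imp : Formula → Formula → Formula
  | box : Formula → Formula
  deriving DecidableEq

namespace Formula

def neg (φ : Formula) : Formula := φ.imp bot

def top : Formula := neg bot

def and (φ ψ : Formula) : Formula := (φ.imp ψ.neg).neg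

def iff (φ ψ : Formula) : Formula := (φ.imp ψ).and (ψ.imp φ)

def dia (φ : Formula) : Formula := φ.neg.box.neg

/-- Variables occurring positively (`true`) / negatively (`false`). -/
def vsgn : Formula → Bool → Finset ℕ
  | var p, true => {p}
  | var _, false => ∅
  | bot, _ => ∅
  | imp φ ψ, b => vsgn φ (!b) ∪ vsgn ψ b
  | box φ, b => vsgn φ b

def vpos (φ : Formula) : Finset ℕ := vsgn φ true
def vneg (φ : Formula) : Finset ℕ := vsgn φ false
def vars (φ : Formula) : Finset ℕ := vpos φ ∪ vneg φ

/-- Modal depth. -/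
def depth : Formula → ℕ
  | var _ => 0
  | bot => 0
  | imp φ ψ => max (depth φ) (depth ψ)
  | box φ => depth φ + 1

/-- Uniform substitution. -/
def subst (σ : ℕ → Formula) : Formula → Formula
  | var p => σ p
  | bot => bot
  | imp φ ψ => (subst σ φ).imp (subst σ ψ)
  | box φ => (subst σ φ).box

/-- The set of subformulas. -/
def subfmls : Formula → Finset Formula
  | var p => {var p}
  | bot => {bot}
  | imp φ ψ => insert (imp φ ψ) (subfmls φ ∪ subfmls ψ)
  | box φ => insert (box φ) (subfmls φ)

/-- n(φ) = |{ψ : □ψ ∈ Sub(φ)}|. -/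
def boxCount (φ : Formula) : ℕ :=
  ((subfmls φ).filter fun ψ => box ψ ∈ subfmls φ).card

/-- The translation ⋆ : p⋆ = p, ⊥⋆ = ⊥, (φ→ψ)⋆ = φ⋆→ψ⋆, (□φ)⋆ = φ⋆ ∧ □φ⋆. -/
def star : Formula → Formula
  | var p => var p
  | bot => bot
  | imp φ ψ => (star φ).imp (star ψ)
  | box φ => (star φ).and (star φ).box

end Formula

/-- Propositional tautology: true under every valuation treating variables and
boxed formulas as atoms. -/
def Tautology (φ : Formula) : Prop :=
  ∀ v : Formula → Bool, v .bot = false →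
    (∀ ψ θ : Formula, v (ψ.imp θ) = (!v ψ || v θ)) → v φ = true

/-- A normal modal logic: contains all tautologies and □(p→q)→(□p→□q), and is
closed under modus ponens, necessitation and uniform substitution. -/
structure IsNormal (L : Set Formula) : Prop where
  taut : ∀ φ, Tautology φ → φ ∈ L
  axK : ((Formula.var 0).imp (Formula.var 1)).box.imp
      ((Formula.var 0).box.imp (Formula.var 1).box) ∈ L
  mp : ∀ φ ψ : Formula, φ.imp ψ ∈ L → φ ∈ L → ψ ∈ L
  nec : ∀ φ : Formula, φ ∈ L → φ.box ∈ L
  subst_mem : ∀ φ ∈ L, ∀ σ : ℕ → Formula, Formula.subst σ φ ∈ L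

/-- The least normal modal logic including `X`. -/
def NormalExt (X : Set Formula) : Set Formula :=
  ⋂₀ {L : Set Formula | IsNormal L ∧ X ⊆ L}

/-- The least normal modal logic K. -/
def TheoryK : Set Formula := NormalExt ∅

def axT : Formula := (Formula.var 0).box.imp (Formula.var 0)
def ax4 : Formula := (Formula.var 0).box.imp (Formula.var 0).box.box
def axB : Formula := (Formula.var 0).imp (Formula.var 0).dia.box
def axD : Formula := Formula.bot.box.neg
def axGL : Formula := ((Formula.var 0).box.imp (Formula.var 0)).box.imp (Formula.var 0).box
def axGrz : Formula :=
  (((Formula.var 0).imp (Formula.var 0).box).box.imp (Formula.var 0)).box.imp (Formula.var 0)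

def TheoryKD : Set Formula := NormalExt {axD}
def TheoryKT : Set Formula := NormalExt {axT}
def TheoryKB : Set Formula := NormalExt {axB}
def TheoryKDB : Set Formula := NormalExt {axD, axB}
def TheoryKTB : Set Formula := NormalExt {axT, axB}
def TheoryK4 : Set Formula := NormalExt {ax4}
def TheoryS4 : Set Formula := NormalExt {axT, ax4}
def TheoryGL : Set Formula := NormalExt {axGL}
def TheoryGrz : Set Formula := NormalExt {axGrz}

/-- L⋆ := {φ : L ⊢ φ⋆}. -/
def starLogic (L : Set Formula) : Set Formula := {φ | Formula.star φ ∈ L}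

/-- θ is a uniform Lyndon interpolant of (φ, P, Q) in L. -/
def IsULInterpolant (L : Set Formula) (φ : Formula) (P Q : Finset ℕ) (θ : Formula) : Prop :=
  θ.vpos ⊆ φ.vpos \ P ∧ θ.vneg ⊆ φ.vneg \ Q ∧ φ.imp θ ∈ L ∧
    ∀ ψ : Formula, ψ.vpos ∩ P = ∅ → ψ.vneg ∩ Q = ∅ → φ.imp ψ ∈ L → θ.imp ψ ∈ L

/-- The uniform Lyndon interpolation property. -/
def ULIP (L : Set Formula) : Prop :=
  ∀ (φ : Formula) (P Q : Finset ℕ), ∃ θ : Formula, IsULInterpolant L φ P Q θ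

/-- The uniform interpolation property. -/
def UIP (L : Set Formula) : Prop :=
  ∀ (φ : Formula) (P : Finset ℕ), ∃ θ : Formula,
    θ.vars ⊆ φ.vars \ P ∧ φ.imp θ ∈ L ∧
      ∀ ψ : Formula, ψ.vars ∩ P = ∅ → φ.imp ψ ∈ L → θ.imp ψ ∈ L

/-- The Lyndon interpolation property. -/
def LIP (L : Set Formula) : Prop :=
  ∀ φ ψ : Formula, φ.imp ψ ∈ L → ∃ θ : Formula,
    θ.vpos ⊆ φ.vpos ∩ ψ.vpos ∧ θ.vneg ⊆ φ.vneg ∩ ψ.vneg ∧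
      φ.imp θ ∈ L ∧ θ.imp ψ ∈ L

/-- A Kripke model. -/
structure KripkeModel where
  W : Type
  nonempty : Nonempty W
  rel : W → W → Prop
  val : W → ℕ → Prop

/-- Satisfaction in a Kripke model. -/
def KripkeModel.Sat (M : KripkeModel) : Formula → M.W → Prop
  | .var p, w => M.val w p
  | .bot, _ => False
  | .imp φ ψ, w => M.Sat φ w → M.Sat ψ w
  | .box φ, w => ∀ x, M.rel w x → M.Sat φ x

/-- A (P,Q)-formula: v⁺(φ) ⊆ P and v⁻(φ) ⊆ Q. -/
def PQFormula (P Q : Finset ℕ) (φ : Formula) : Prop := φ.vpos ⊆ P ∧ φ.vneg ⊆ Q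

/-- `F n P Q` is a finite list of (P,Q)-formulas of modal depth ≤ n such that every
(P,Q)-formula of modal depth ≤ n is K-provably equivalent to some member. -/
def IsFamily (F : ℕ → Finset ℕ → Finset ℕ → List Formula) : Prop :=
  ∀ (n : ℕ) (P Q : Finset ℕ),
    (∀ φ ∈ F n P Q, PQFormula P Q φ ∧ φ.depth ≤ n) ∧
    ∀ ψ : Formula, PQFormula P Q ψ → ψ.depth ≤ n →
      ∃ φ ∈ F n P Q, Formula.iff φ ψ ∈ TheoryK

/-- Th_n^{(P,Q)}(w) = {φ ∈ F_n^{(P,Q)} : w ⊩ φ}. -/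
def Th (F : ℕ → Finset ℕ → Finset ℕ → List Formula) (M : KripkeModel)
    (n : ℕ) (P Q : Finset ℕ) (w : M.W) : Set Formula :=
  {φ | φ ∈ F n P Q ∧ M.Sat φ w}

def conjList : List Formula → Formula
  | [] => Formula.top
  | φ :: l => φ.and (conjList l)

open Classical in
/-- C_n^{(P,Q)}(w) = ⋀ Th_n^{(P,Q)}(w). -/
noncomputable def Cfml (F : ℕ → Finset ℕ → Finset ℕ → List Formula) (M : KripkeModel)
    (n : ℕ) (P Q : Finset ℕ) (w : M.W) : Formula :=
  conjList ((F n P Q).filter fun φ => decide (M.Sat φ w))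

/-- Layered (P,Q)-bisimulation between M and M'. -/
def LayeredBisim (P Q : Finset ℕ) (M M' : KripkeModel)
    (Z : M.W → ℕ → M'.W → Prop) : Prop :=
  (∀ w n w', Z w n w' →
    (∀ p ∈ P, M.val w p → M'.val w' p) ∧ (∀ q ∈ Q, ¬M.val w q → ¬M'.val w' q)) ∧
  (∀ w n w', Z w (n + 1) w' → ∀ x, M.rel w x → ∃ x', M'.rel w' x' ∧ Z x n x') ∧
  (∀ w n w', Z w (n + 1) w' → ∀ x', M'.rel w' x' → ∃ x, M.rel w x ∧ Z x n x')

/-- Downward closedness of a layered bisimulation. -/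
def DownClosed (M M' : KripkeModel) (Z : M.W → ℕ → M'.W → Prop) : Prop :=
  ∀ w n w', Z w n w' → ∀ m ≤ n, Z w m w'

/-- A class of Kripke models has ULIP. -/
def ClassULIP (F : ℕ → Finset ℕ → Finset ℕ → List Formula) (Cl : Set KripkeModel) : Prop :=
  ∀ P1 P2 P3 Q1 Q2 Q3 : Finset ℕ,
    Disjoint P1 P2 → Disjoint P1 P3 → Disjoint P2 P3 →
    Disjoint Q1 Q2 → Disjoint Q1 Q3 → Disjoint Q2 Q3 →
    ∀ M : KripkeModel, M ∈ Cl → ∀ M' : KripkeModel, M' ∈ Cl →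
    ∀ w : M.W, ∀ w' : M'.W, ∀ m n : ℕ,
      Th F M n P2 Q2 w ⊆ Th F M' n P2 Q2 w' →
      ∃ Mst : KripkeModel, Mst ∈ Cl ∧ ∃ wst : Mst.W,
        Th F M n (P1 ∪ P2) (Q1 ∪ Q2) w ⊆ Th F Mst n (P1 ∪ P2) (Q1 ∪ Q2) wst ∧
        Th F Mst m (P2 ∪ P3) (Q2 ∪ Q3) wst ⊆ Th F M' m (P2 ∪ P3) (Q2 ∪ Q3) w'

/-!
(1) ⇒ (2): take the class of all Kripke models validating `L`, for which `L` is complete by the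
canonical model construction. Given `Th_n^{(P₂,Q₂)}(w) ⊆ Th_n^{(P₂,Q₂)}(w')`, let `A` be the
conjunction of the `(P₁ ∪ P₂, Q₁ ∪ Q₂)`-formulas of depth `≤ n` true at `w` and `B` the
disjunction of the `(P₂ ∪ P₃, Q₂ ∪ Q₃)`-formulas of depth `≤ m` false at `w'`. If `L ⊢ A → B`,
the uniform Lyndon interpolant `θ` of `(A, P₁, Q₁)` is a `(P₂, Q₂)`-formula of depth `≤ n` with
`L ⊢ θ → B`; it holds at `w`, hence at `w'`, and then so does `B`, which is absurd. So `A ∧ ¬B`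
holds at some world `w*` of a model of the class, and that world witnesses the ULIP.

(2) ⇒ (1): with `n = d(φ)`, `P' = v⁺(φ) ∖ P`, `Q' = v⁻(φ) ∖ Q`, the interpolant is the disjunction
of the characteristic formulas `C_n^{(P',Q')}(w)` of all worlds `w` of models in the class that
satisfy `φ`; there are finitely many of them up to syntactic equality. Its minimality is the ULIP
of the class applied to `P₁ = v⁺(φ) ∩ P`, `P₂ = P'`, `P₃ = v⁺(ψ) ∖ P'` (and likewise for `Q`).
-/

def Formula.or (φ ψ : Formula) : Formula := φ.neg.imp ψ

def disjList : List Formula → Formula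
  | [] => Formula.bot
  | φ :: l => φ.or (disjList l)

namespace Formula

variable (φ ψ : Formula) (s : Bool)

@[simp] lemma vsgn_neg : φ.neg.vsgn s = φ.vsgn !s := by
  simp [neg, vsgn]

@[simp] lemma vsgn_top : top.vsgn s = ∅ := by
  simp [top, vsgn]

@[simp] lemma vsgn_and : (φ.and ψ).vsgn s = φ.vsgn s ∪ ψ.vsgn s := by
  simp [Formula.and, vsgn]

@[simp] lemma vsgn_or : (φ.or ψ).vsgn s = φ.vsgn s ∪ ψ.vsgn s := by
  simp [Formula.or, vsgn]

@[simp] lemma depth_top : top.depth = 0 := rfl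

@[simp] lemma depth_and : (φ.and ψ).depth = max φ.depth ψ.depth := by
  simp [Formula.and, neg, depth]

@[simp] lemma depth_or : (φ.or ψ).depth = max φ.depth ψ.depth := by
  simp [Formula.or, neg, depth]

end Formula

open Formula

lemma vsgn_conjList_subset {l : List Formula} {s : Bool} {X : Finset ℕ}
    (h : ∀ χ ∈ l, χ.vsgn s ⊆ X) : (conjList l).vsgn s ⊆ X := by
  induction l with
  | nil => simp [conjList]
  | cons χ l ih =>
    simpa [conjList] using
      Finset.union_subset (h χ (by simp)) (ih fun θ hθ => h θ (by simp [hθ]))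

lemma vsgn_disjList_subset {l : List Formula} {s : Bool} {X : Finset ℕ}
    (h : ∀ χ ∈ l, χ.vsgn s ⊆ X) : (disjList l).vsgn s ⊆ X := by
  induction l with
  | nil => simp [disjList, vsgn]
  | cons χ l ih =>
    simpa [disjList] using
      Finset.union_subset (h χ (by simp)) (ih fun θ hθ => h θ (by simp [hθ]))

lemma depth_conjList_le {l : List Formula} {n : ℕ} (h : ∀ χ ∈ l, χ.depth ≤ n) :
    (conjList l).depth ≤ n := by
  induction l with
  | nil => simp [conjList]
  | cons χ l ih => simpa [conjList, h χ] using ih fun θ hθ => h θ (by simp [hθ])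

lemma depth_disjList_le {l : List Formula} {n : ℕ} (h : ∀ χ ∈ l, χ.depth ≤ n) :
    (disjList l).depth ≤ n := by
  induction l with
  | nil => simp [disjList, depth]
  | cons χ l ih => simpa [disjList, h χ] using ih fun θ hθ => h θ (by simp [hθ])

namespace PQFormula

variable {P Q : Finset ℕ} {l : List Formula}

lemma conjList (h : ∀ χ ∈ l, PQFormula P Q χ) : PQFormula P Q (conjList l) :=
  ⟨vsgn_conjList_subset fun χ hχ => (h χ hχ).1, vsgn_conjList_subset fun χ hχ => (h χ hχ).2⟩

lemma disjList (h : ∀ χ ∈ l, PQFormula P Q χ) : PQFormula P Q (disjList l) :=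
  ⟨vsgn_disjList_subset fun χ hχ => (h χ hχ).1, vsgn_disjList_subset fun χ hχ => (h χ hχ).2⟩

end PQFormula

open Classical in
noncomputable def Dfml (F : ℕ → Finset ℕ → Finset ℕ → List Formula) (M : KripkeModel)
    (n : ℕ) (P Q : Finset ℕ) (w : M.W) : Formula :=
  disjList ((F n P Q).filter fun φ => decide ¬M.Sat φ w)

namespace KripkeModel

variable (M : KripkeModel) (φ ψ : Formula) (w : M.W)

@[simp] lemma sat_bot : ¬M.Sat bot w := id

@[simp] lemma sat_imp : M.Sat (φ.imp ψ) w ↔ (M.Sat φ w → M.Sat ψ w) := Iff.rfl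

@[simp] lemma sat_neg : M.Sat φ.neg w ↔ ¬M.Sat φ w := Iff.rfl

@[simp] lemma sat_top : M.Sat top w := id

@[simp] lemma sat_and : M.Sat (φ.and ψ) w ↔ M.Sat φ w ∧ M.Sat ψ w := by
  simp [Formula.and]

@[simp] lemma sat_or : M.Sat (φ.or ψ) w ↔ M.Sat φ w ∨ M.Sat ψ w := by
  simp [Formula.or, or_iff_not_imp_left]

@[simp] lemma sat_iff : M.Sat (φ.iff ψ) w ↔ (M.Sat φ w ↔ M.Sat ψ w) := by
  simp [Formula.iff, iff_def]

@[simp] lemma sat_conjList (l : List Formula) :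
    M.Sat (conjList l) w ↔ ∀ χ ∈ l, M.Sat χ w := by
  induction l with
  | nil => simp [conjList]
  | cons χ l ih => simp [conjList, ih]

@[simp] lemma sat_disjList (l : List Formula) :
    M.Sat (disjList l) w ↔ ∃ χ ∈ l, M.Sat χ w := by
  induction l with
  | nil => simp [disjList]
  | cons χ l ih => simp [disjList, ih]

variable {M w} {M' : KripkeModel} {F : ℕ → Finset ℕ → Finset ℕ → List Formula} {n : ℕ}
  {P Q : Finset ℕ} {w' : M'.W}

lemma sat_Cfml_iff :
    M'.Sat (Cfml F M n P Q w) w' ↔ Th F M n P Q w ⊆ Th F M' n P Q w' := by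
  simp only [Cfml, Th, Set.subset_def, sat_conjList, List.mem_filter, decide_eq_true_eq,
    Set.mem_ofPred_eq]
  grind

lemma sat_Dfml_iff :
    M'.Sat (Dfml F M n P Q w) w' ↔ ¬Th F M' n P Q w' ⊆ Th F M n P Q w := by
  simp only [Dfml, Th, Set.subset_def, sat_disjList, List.mem_filter, decide_eq_true_eq,
    Set.mem_ofPred_eq]
  grind

end KripkeModel

namespace KripkeModel

def substModel (M : KripkeModel) (σ : ℕ → Formula) : KripkeModel :=
  ⟨M.W, M.nonempty, M.rel, fun w p => M.Sat (σ p) w⟩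

lemma sat_substModel (M : KripkeModel) (σ : ℕ → Formula) (φ : Formula) (w : M.W) :
    (M.substModel σ).Sat φ w ↔ M.Sat (φ.subst σ) w := by
  induction φ generalizing w with
  | var p => rfl
  | bot => rfl
  | imp φ ψ ihφ ihψ => exact imp_congr (ihφ w) (ihψ w)
  | box φ ih => exact forall_congr' fun x => imp_congr_right fun _ => ih x

lemma sat_of_tautology {φ : Formula} (h : Tautology φ) (M : KripkeModel) (w : M.W) :
    M.Sat φ w := by
  classical
  simpa using h (fun ψ => decide (M.Sat ψ w)) (by simp) (fun ψ θ => by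
    by_cases M.Sat ψ w <;> simp [*])

end KripkeModel

lemma isNormal_validities : IsNormal {φ | ∀ (M : KripkeModel) (w : M.W), M.Sat φ w} where
  taut _ h := KripkeModel.sat_of_tautology h
  axK _ _ h₁ h₂ x hx := h₁ x hx (h₂ x hx)
  mp _ _ h₁ h₂ M w := h₁ M w (h₂ M w)
  nec _ h M _ x _ := h M x
  subst_mem φ h σ M w := (M.sat_substModel σ φ w).mp (h (M.substModel σ) w)

lemma normalExt_subset {X L : Set Formula} (hL : IsNormal L) (hX : X ⊆ L) : NormalExt X ⊆ L :=
  Set.sInter_subset_of_mem ⟨hL, hX⟩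

lemma TheoryK.sat {φ : Formula} (h : φ ∈ TheoryK) (M : KripkeModel) (w : M.W) : M.Sat φ w :=
  normalExt_subset isNormal_validities (Set.empty_subset _) h M w

namespace IsNormal

variable {L : Set Formula} (hL : IsNormal L)
include hL

lemma mp_taut {a b : Formula} (ht : Tautology (a.imp b)) (ha : a ∈ L) : b ∈ L :=
  hL.mp _ _ (hL.taut _ ht) ha

lemma mp_taut₂ {a b c : Formula} (ht : Tautology (a.imp (b.imp c))) (ha : a ∈ L) (hb : b ∈ L) :
    c ∈ L :=
  hL.mp _ _ (hL.mp_taut ht ha) hb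

lemma top_mem : top ∈ L :=
  hL.taut _ fun v h0 h1 => by simp [top, neg, h0, h1]

lemma imp_self_mem (a : Formula) : a.imp a ∈ L :=
  hL.taut _ fun v _ h1 => by simp only [h1]; cases v a <;> rfl

lemma imp_of_mem {b : Formula} (a : Formula) (h : b ∈ L) : a.imp b ∈ L :=
  hL.mp_taut (fun v _ h1 => by simp only [h1]; cases v a <;> cases v b <;> rfl) h

lemma imp_trans {a b c : Formula} (h₁ : a.imp b ∈ L) (h₂ : b.imp c ∈ L) : a.imp c ∈ L :=
  hL.mp_taut₂ (fun v _ h1 => by simp only [h1]; cases v a <;> cases v b <;> cases v c <;> rfl) h₁ h₂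

lemma imp_mp {a b c : Formula} (h₁ : c.imp (a.imp b) ∈ L) (h₂ : c.imp a ∈ L) : c.imp b ∈ L :=
  hL.mp_taut₂ (fun v _ h1 => by simp only [h1]; cases v a <;> cases v b <;> cases v c <;> rfl) h₁ h₂

lemma imp_and {a b c : Formula} (h₁ : c.imp a ∈ L) (h₂ : c.imp b ∈ L) : c.imp (a.and b) ∈ L :=
  hL.mp_taut₂ (fun v h0 h1 => by
    simp only [Formula.and, neg, h0, h1]; cases v a <;> cases v b <;> cases v c <;> rfl) h₁ h₂

lemma and_imp_left (a b : Formula) : (a.and b).imp a ∈ L :=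
  hL.taut _ fun v h0 h1 => by
    simp only [Formula.and, neg, h0, h1]; cases v a <;> cases v b <;> rfl

lemma and_imp_right (a b : Formula) : (a.and b).imp b ∈ L :=
  hL.taut _ fun v h0 h1 => by
    simp only [Formula.and, neg, h0, h1]; cases v a <;> cases v b <;> rfl

lemma imp_imp_and (a b : Formula) : a.imp (b.imp (a.and b)) ∈ L :=
  hL.taut _ fun v h0 h1 => by
    simp only [Formula.and, neg, h0, h1]; cases v a <;> cases v b <;> rfl

lemma imp_neg_of_and_imp_bot {a b : Formula} (h : (a.and b).imp bot ∈ L) : a.imp b.neg ∈ L :=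
  hL.mp_taut (fun v h0 h1 => by
    simp only [Formula.and, neg, h0, h1]; cases v a <;> cases v b <;> rfl) h

lemma and_imp_of_imp_imp {a b c d : Formula} (h₁ : a.imp (b.imp d) ∈ L) (h₂ : c.imp b ∈ L) :
    (a.and c).imp d ∈ L :=
  hL.mp_taut₂ (fun v h0 h1 => by
    simp only [Formula.and, neg, h0, h1]
    cases v a <;> cases v b <;> cases v c <;> cases v d <;> rfl) h₁ h₂

lemma neg_neg_imp (a : Formula) : a.neg.neg.imp a ∈ L :=
  hL.taut _ fun v h0 h1 => by simp only [neg, h0, h1]; cases v a <;> rfl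

lemma imp_intro_mem (a b : Formula) : b.imp (a.imp b) ∈ L :=
  hL.taut _ fun v _ h1 => by simp only [h1]; cases v a <;> cases v b <;> rfl

lemma neg_imp_imp (a b : Formula) : a.neg.imp (a.imp b) ∈ L :=
  hL.taut _ fun v h0 h1 => by simp only [neg, h0, h1]; cases v a <;> cases v b <;> rfl

lemma imp_conjList {a : Formula} {l : List Formula} (h : ∀ χ ∈ l, a.imp χ ∈ L) :
    a.imp (conjList l) ∈ L := by
  induction l with
  | nil => exact hL.imp_of_mem a hL.top_mem
  | cons χ l ih => exact hL.imp_and (h χ (by simp)) (ih fun θ hθ => h θ (by simp [hθ]))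

lemma conjList_imp {χ : Formula} {l : List Formula} (h : χ ∈ l) : (conjList l).imp χ ∈ L := by
  induction l with
  | nil => simp at h
  | cons θ l ih =>
    rcases List.mem_cons.mp h with rfl | h
    · exact hL.and_imp_left _ _
    · exact hL.imp_trans (hL.and_imp_right _ _) (ih h)

lemma box_imp_box_imp (a b : Formula) : (a.imp b).box.imp (a.box.imp b.box) ∈ L := by
  simpa [subst] using hL.subst_mem _ hL.axK fun k => if k = 0 then a else b

lemma box_mono {a b : Formula} (h : a.imp b ∈ L) : a.box.imp b.box ∈ L :=
  hL.mp _ _ (hL.box_imp_box_imp a b) (hL.nec _ h)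

lemma conjList_map_box_imp (l : List Formula) :
    (conjList (l.map box)).imp (conjList l).box ∈ L := by
  induction l with
  | nil => exact hL.imp_of_mem _ (hL.nec _ hL.top_mem)
  | cons a l ih =>
    exact hL.and_imp_of_imp_imp
      (hL.imp_trans (hL.box_mono (hL.imp_imp_and _ _)) (hL.box_imp_box_imp _ _)) ih

end IsNormal

def Derives (L Γ : Set Formula) (φ : Formula) : Prop :=
  ∃ l : List Formula, (∀ χ ∈ l, χ ∈ Γ) ∧ (conjList l).imp φ ∈ L

def Consistent (L Γ : Set Formula) : Prop := ¬Derives L Γ bot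

def MaxConsistent (L Γ : Set Formula) : Prop :=
  Consistent L Γ ∧ ∀ φ : Formula, φ ∈ Γ ∨ φ.neg ∈ Γ

lemma Consistent.sUnion {L : Set Formula} {c : Set (Set Formula)} (hc : ∀ Γ ∈ c, Consistent L Γ)
    (hchain : IsChain (· ⊆ ·) c) (hne : c.Nonempty) : Consistent L (⋃₀ c) := by
  rintro ⟨l, hl, d⟩
  obtain ⟨Γ, hΓ, hlΓ⟩ :=
    hchain.directedOn.exists_mem_subset_of_finite_of_subset_sUnion hne l.finite_toSet hl
  exact hc Γ hΓ ⟨l, hlΓ, d⟩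

namespace IsNormal

variable {L : Set Formula} (hL : IsNormal L) {Γ : Set Formula} {φ ψ : Formula}
include hL

lemma derives_of_mem (h : φ ∈ Γ) : Derives L Γ φ :=
  ⟨[φ], by simpa using h, hL.conjList_imp (List.mem_singleton_self φ)⟩

lemma derives_of_mem_logic (h : φ ∈ L) : Derives L Γ φ :=
  ⟨[], by simp, hL.imp_of_mem _ h⟩

lemma derives_mp (h₁ : Derives L Γ (φ.imp ψ)) (h₂ : Derives L Γ φ) : Derives L Γ ψ := by
  obtain ⟨l₁, hl₁, d₁⟩ := h₁
  obtain ⟨l₂, hl₂, d₂⟩ := h₂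
  have proj {l : List Formula} (hl : l ⊆ l₁ ++ l₂) :
      (conjList (l₁ ++ l₂)).imp (conjList l) ∈ L :=
    hL.imp_conjList fun χ hχ => hL.conjList_imp (hl hχ)
  refine ⟨l₁ ++ l₂, fun χ hχ => (List.mem_append.mp hχ).elim (hl₁ χ) (hl₂ χ), ?_⟩
  exact hL.imp_mp (hL.imp_trans (proj (List.subset_append_left _ _)) d₁)
    (hL.imp_trans (proj (List.subset_append_right _ _)) d₂)

lemma derives_neg_of_derives_insert (h : Derives L (insert φ Γ) bot) :
    Derives L Γ φ.neg := by
  classical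
  obtain ⟨l, hl, d⟩ := h
  refine ⟨l.filter (· ≠ φ), fun χ hχ => ?_, hL.imp_neg_of_and_imp_bot (hL.imp_trans ?_ d)⟩
  · obtain ⟨hχl, hχφ⟩ := List.mem_filter.mp hχ
    exact (hl χ hχl).resolve_left (by simpa using hχφ)
  · refine hL.imp_conjList fun χ hχ => ?_
    by_cases hχφ : χ = φ
    · exact hχφ ▸ hL.and_imp_right _ _
    · exact hL.imp_trans (hL.and_imp_left _ _)
        (hL.conjList_imp (List.mem_filter.mpr ⟨hχ, by simpa using hχφ⟩))

lemma consistent_singleton_neg (h : φ ∉ L) : Consistent L {φ.neg} := by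
  intro hd
  obtain ⟨l, hl, d⟩ := hL.derives_neg_of_derives_insert (Γ := ∅) (by simpa using hd)
  have hl : l = [] := List.eq_nil_iff_forall_not_mem.mpr hl
  subst hl
  exact h (hL.mp _ _ (hL.neg_neg_imp φ) (hL.mp _ _ d hL.top_mem))

lemma exists_maxConsistent_superset (h : Consistent L Γ) :
    ∃ Δ, Γ ⊆ Δ ∧ MaxConsistent L Δ := by
  obtain ⟨Δ, hΓΔ, hmax⟩ := zorn_subset_nonempty {Δ | Consistent L Δ}
    (fun c hc hchain hne => ⟨⋃₀ c, Consistent.sUnion hc hchain hne,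
      fun _ => Set.subset_sUnion_of_mem⟩) Γ h
  refine ⟨Δ, hΓΔ, hmax.prop, fun φ => ?_⟩
  by_contra! hφ
  have hneg : Derives L Δ φ.neg :=
    hL.derives_neg_of_derives_insert (by_contra fun hc => hφ.1 (hmax.mem_of_prop_insert hc))
  have hnegneg : Derives L Δ φ.neg.neg :=
    hL.derives_neg_of_derives_insert (by_contra fun hc => hφ.2 (hmax.mem_of_prop_insert hc))
  exact hmax.prop (hL.derives_mp hnegneg hneg)

end IsNormal

namespace MaxConsistent

variable {L : Set Formula} (hL : IsNormal L) {Γ : Set Formula} (hΓ : MaxConsistent L Γ)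
  {φ ψ : Formula}
include hL hΓ

lemma mem_of_derives (h : Derives L Γ φ) : φ ∈ Γ :=
  (hΓ.2 φ).resolve_right fun hn => hΓ.1 (hL.derives_mp (hL.derives_of_mem hn) h)

lemma mem_of_imp_mem (h : φ.imp ψ ∈ L) (hφ : φ ∈ Γ) : ψ ∈ Γ :=
  hΓ.mem_of_derives hL (hL.derives_mp (hL.derives_of_mem_logic h) (hL.derives_of_mem hφ))

lemma neg_notMem_of_mem (h : φ ∈ Γ) : φ.neg ∉ Γ := fun hn =>
  hΓ.1 (hL.derives_mp (hL.derives_of_mem hn) (hL.derives_of_mem h))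

lemma imp_mem_iff : φ.imp ψ ∈ Γ ↔ (φ ∈ Γ → ψ ∈ Γ) := by
  refine ⟨fun h hφ => hΓ.mem_of_derives hL (hL.derives_mp (hL.derives_of_mem h)
    (hL.derives_of_mem hφ)), fun h => ?_⟩
  rcases hΓ.2 φ with hφ | hφ
  · exact hΓ.mem_of_imp_mem hL (hL.imp_intro_mem φ ψ) (h hφ)
  · exact hΓ.mem_of_imp_mem hL (hL.neg_imp_imp φ ψ) hφ

lemma consistent_unbox_insert_neg (h : φ.box ∉ Γ) :
    Consistent L (insert φ.neg {ψ | ψ.box ∈ Γ}) := by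
  intro hd
  obtain ⟨l, hl, d⟩ := hL.derives_neg_of_derives_insert hd
  have hφ : (conjList l).box.imp φ.box ∈ L := hL.box_mono (hL.imp_trans d (hL.neg_neg_imp φ))
  refine h (hΓ.mem_of_imp_mem hL (hL.imp_trans (hL.conjList_map_box_imp l) hφ)
    (hΓ.mem_of_derives hL ⟨l.map box, fun χ hχ => ?_, hL.imp_self_mem _⟩))
  obtain ⟨ψ, hψ, rfl⟩ := List.mem_map.mp hχ
  exact hl ψ hψ

end MaxConsistent

def canonicalModel (L : Set Formula) (h : Nonempty {Γ // MaxConsistent L Γ}) :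
    KripkeModel where
  W := {Γ // MaxConsistent L Γ}
  nonempty := h
  rel Γ Δ := ∀ φ : Formula, φ.box ∈ Γ.1 → φ ∈ Δ.1
  val Γ p := var p ∈ Γ.1

lemma IsNormal.sat_canonicalModel_iff {L : Set Formula} (hL : IsNormal L)
    (h : Nonempty {Γ // MaxConsistent L Γ}) (φ : Formula) (Γ : (canonicalModel L h).W) :
    (canonicalModel L h).Sat φ Γ ↔ φ ∈ Γ.1 := by
  induction φ generalizing Γ with
  | var p => rfl
  | bot => exact ⟨False.elim, fun hb => Γ.2.1 (hL.derives_of_mem hb)⟩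
  | imp φ ψ ihφ ihψ => rw [KripkeModel.sat_imp, ihφ, ihψ, Γ.2.imp_mem_iff hL]
  | box φ ih =>
    refine ⟨fun hsat => ?_, fun hφ Δ hΓΔ => (ih Δ).mpr (hΓΔ φ hφ)⟩
    by_contra hφ
    obtain ⟨Δ, hsub, hΔ⟩ :=
      hL.exists_maxConsistent_superset (Γ.2.consistent_unbox_insert_neg hL hφ)
    have hφΔ : φ ∈ Δ := (ih ⟨Δ, hΔ⟩).mp (hsat ⟨Δ, hΔ⟩ fun ψ hψ => hsub (.inr hψ))
    exact hΔ.neg_notMem_of_mem hL hφΔ (hsub (.inl rfl))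

def validModels (L : Set Formula) : Set KripkeModel :=
  {M | ∀ φ ∈ L, ∀ w : M.W, M.Sat φ w}

lemma IsNormal.exists_validModels_not_sat {L : Set Formula} (hL : IsNormal L) {φ : Formula}
    (hφ : φ ∉ L) : ∃ M ∈ validModels L, ∃ w : M.W, ¬M.Sat φ w := by
  obtain ⟨Δ, hsub, hΔ⟩ := hL.exists_maxConsistent_superset (hL.consistent_singleton_neg hφ)
  have hne : Nonempty {Γ // MaxConsistent L Γ} := ⟨⟨Δ, hΔ⟩⟩
  refine ⟨canonicalModel L hne, fun ψ hψ Γ => ?_, ⟨Δ, hΔ⟩, fun hsat => ?_⟩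
  · exact (hL.sat_canonicalModel_iff hne ψ Γ).mpr
      (Γ.2.mem_of_derives hL (hL.derives_of_mem_logic hψ))
  · exact hΔ.neg_notMem_of_mem hL ((hL.sat_canonicalModel_iff hne φ _).mp hsat) (hsub rfl)

lemma IsNormal.mem_iff_forall_validModels {L : Set Formula} (hL : IsNormal L) (φ : Formula) :
    φ ∈ L ↔ ∀ M ∈ validModels L, ∀ w : M.W, M.Sat φ w := by
  refine ⟨fun hφ M hM => hM φ hφ, fun h => ?_⟩
  by_contra hφ
  obtain ⟨M, hM, w, hw⟩ := hL.exists_validModels_not_sat hφ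
  exact hw (h M hM w)

namespace IsFamily

variable {F : ℕ → Finset ℕ → Finset ℕ → List Formula} (hF : IsFamily F) {n : ℕ}
  {P Q : Finset ℕ}
include hF

lemma pqFormula_conjList {l : List Formula} (hl : ∀ χ ∈ l, χ ∈ F n P Q) :
    PQFormula P Q (conjList l) ∧ (conjList l).depth ≤ n :=
  ⟨.conjList fun χ hχ => ((hF n P Q).1 χ (hl χ hχ)).1,
    depth_conjList_le fun χ hχ => ((hF n P Q).1 χ (hl χ hχ)).2⟩

lemma pqFormula_disjList {l : List Formula} (hl : ∀ χ ∈ l, χ ∈ F n P Q) :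
    PQFormula P Q (disjList l) ∧ (disjList l).depth ≤ n :=
  ⟨.disjList fun χ hχ => ((hF n P Q).1 χ (hl χ hχ)).1,
    depth_disjList_le fun χ hχ => ((hF n P Q).1 χ (hl χ hχ)).2⟩

lemma pqFormula_Cfml (M : KripkeModel) (w : M.W) :
    PQFormula P Q (Cfml F M n P Q w) ∧ (Cfml F M n P Q w).depth ≤ n :=
  hF.pqFormula_conjList fun _ hχ => (List.mem_filter.mp hχ).1

lemma sat_of_Th_subset {M M' : KripkeModel} {w : M.W} {w' : M'.W}
    (h : Th F M n P Q w ⊆ Th F M' n P Q w') {φ : Formula} (hφ : PQFormula P Q φ)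
    (hd : φ.depth ≤ n) (hw : M.Sat φ w) : M'.Sat φ w' := by
  obtain ⟨φ₀, hφ₀, hiff⟩ := (hF n P Q).2 φ hφ hd
  have equiv (N : KripkeModel) (v : N.W) : N.Sat φ₀ v ↔ N.Sat φ v :=
    (N.sat_iff φ₀ φ v).mp (TheoryK.sat hiff N v)
  exact (equiv M' w').mp (h ⟨hφ₀, (equiv M w).mpr hw⟩).2

end IsFamily

lemma ClassULIP.sat_of_Th_subset {F : ℕ → Finset ℕ → Finset ℕ → List Formula}
    {Cl : Set KripkeModel} (hCl : ClassULIP F Cl) (hF : IsFamily F) {φ ψ : Formula}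
    {P Q : Finset ℕ} (hφψ : ∀ M ∈ Cl, ∀ w : M.W, M.Sat φ w → M.Sat ψ w)
    (hψP : ψ.vpos ∩ P = ∅) (hψQ : ψ.vneg ∩ Q = ∅) {M M' : KripkeModel} (hM : M ∈ Cl)
    (hM' : M' ∈ Cl) {w : M.W} {w' : M'.W}
    (hTh : Th F M φ.depth (φ.vpos \ P) (φ.vneg \ Q) w ⊆
      Th F M' φ.depth (φ.vpos \ P) (φ.vneg \ Q) w')
    (hw : M.Sat φ w) : M'.Sat ψ w' := by
  rw [← Finset.disjoint_iff_inter_eq_empty] at hψP hψQ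
  obtain ⟨Mst, hMst, wst, h₁, h₂⟩ := hCl (φ.vpos ∩ P) (φ.vpos \ P) (ψ.vpos \ (φ.vpos \ P))
    (φ.vneg ∩ Q) (φ.vneg \ Q) (ψ.vneg \ (φ.vneg \ Q))
    (by grind [Finset.disjoint_left]) (by grind [Finset.disjoint_left])
    (by grind [Finset.disjoint_left]) (by grind [Finset.disjoint_left])
    (by grind [Finset.disjoint_left]) (by grind [Finset.disjoint_left])
    M hM M' hM' w w' ψ.depth φ.depth hTh
  have hwst : Mst.Sat φ wst :=
    hF.sat_of_Th_subset h₁ ⟨fun x _ => by grind, fun x _ => by grind⟩ le_rfl hw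
  exact hF.sat_of_Th_subset h₂ ⟨fun x _ => by grind, fun x _ => by grind⟩ le_rfl
    (hφψ Mst hMst wst hwst)

lemma IsNormal.classULIP_validModels {F : ℕ → Finset ℕ → Finset ℕ → List Formula}
    (hF : IsFamily F) {L : Set Formula} (hL : IsNormal L)
    (hulip : ∀ (φ : Formula) (P Q : Finset ℕ), ∃ θ : Formula,
      IsULInterpolant L φ P Q θ ∧ θ.depth ≤ φ.depth) :
    ClassULIP F (validModels L) := by
  intro P₁ P₂ P₃ Q₁ Q₂ Q₃ hP₁₂ hP₁₃ _ hQ₁₂ hQ₁₃ _ M hM M' hM' w w' m n hTh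
  set A := Cfml F M n (P₁ ∪ P₂) (Q₁ ∪ Q₂) w
  set B := Dfml F M' m (P₂ ∪ P₃) (Q₂ ∪ Q₃) w'
  suffices A.imp B ∉ L by
    obtain ⟨Mst, hMst, wst, hwst⟩ := hL.exists_validModels_not_sat this
    simp only [KripkeModel.sat_imp, KripkeModel.sat_Cfml_iff, KripkeModel.sat_Dfml_iff,
      Classical.not_imp, not_not, A, B] at hwst
    exact ⟨Mst, hMst, wst, hwst⟩
  intro hAB
  obtain ⟨θ, ⟨hθP, hθQ, hAθ, hθmin⟩, hθd⟩ := hulip A P₁ Q₁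
  have hA := hF.pqFormula_Cfml (n := n) (P := P₁ ∪ P₂) (Q := Q₁ ∪ Q₂) M w
  have hB : PQFormula (P₂ ∪ P₃) (Q₂ ∪ Q₃) B :=
    (hF.pqFormula_disjList fun _ hχ => (List.mem_filter.mp hχ).1).1
  have hθB : θ.imp B ∈ L := hθmin B
    (Finset.disjoint_iff_inter_eq_empty.mp
      ((Finset.disjoint_union_left.mpr ⟨hP₁₂.symm, hP₁₃.symm⟩).mono_left hB.1))
    (Finset.disjoint_iff_inter_eq_empty.mp
      ((Finset.disjoint_union_left.mpr ⟨hQ₁₂.symm, hQ₁₃.symm⟩).mono_left hB.2)) hAB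
  have hθ : PQFormula P₂ Q₂ θ :=
    ⟨hθP.trans (sdiff_le_iff.mpr hA.1.1), hθQ.trans (sdiff_le_iff.mpr hA.1.2)⟩
  have hwθ : M.Sat θ w := hM _ hAθ w (KripkeModel.sat_Cfml_iff.mpr subset_rfl)
  have hw'B : M'.Sat B w' := hM' _ hθB w' (hF.sat_of_Th_subset hTh hθ (hθd.trans hA.2) hwθ)
  exact KripkeModel.sat_Dfml_iff.mp hw'B subset_rfl

lemma exists_ulInterpolant_of_classULIP {F : ℕ → Finset ℕ → Finset ℕ → List Formula}
    (hF : IsFamily F) {L : Set Formula} {Cl : Set KripkeModel}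
    (hsc : ∀ φ : Formula, φ ∈ L ↔ ∀ M : KripkeModel, M ∈ Cl → ∀ w : M.W, M.Sat φ w)
    (hCl : ClassULIP F Cl) (φ : Formula) (P Q : Finset ℕ) :
    ∃ θ : Formula, IsULInterpolant L φ P Q θ ∧ θ.depth ≤ φ.depth := by
  set n := φ.depth
  set P' := φ.vpos \ P
  set Q' := φ.vneg \ Q
  set types : Set Formula := {χ | ∃ M ∈ Cl, ∃ w : M.W, M.Sat φ w ∧ Cfml F M n P' Q' w = χ}
  have hfin : types.Finite := ((F n P' Q').sublists.map conjList).finite_toSet.subset <| by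
    rintro _ ⟨M, -, w, -, rfl⟩
    exact List.mem_map.mpr ⟨_, List.mem_sublists.mpr List.filter_sublist, rfl⟩
  set θ := disjList hfin.toFinset.toList
  have hsat (M' : KripkeModel) (w' : M'.W) : M'.Sat θ w' ↔
      ∃ M ∈ Cl, ∃ w : M.W, M.Sat φ w ∧ Th F M n P' Q' w ⊆ Th F M' n P' Q' w' := by
    simp [θ, types, KripkeModel.sat_Cfml_iff, and_assoc]
  have hθ : PQFormula P' Q' θ ∧ θ.depth ≤ n := by
    have hmem (χ) (hχ : χ ∈ hfin.toFinset.toList) : PQFormula P' Q' χ ∧ χ.depth ≤ n := by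
      obtain ⟨M, -, w, -, rfl⟩ := hfin.mem_toFinset.mp (Finset.mem_toList.mp hχ)
      exact hF.pqFormula_Cfml M w
    exact ⟨.disjList fun χ hχ => (hmem χ hχ).1, depth_disjList_le fun χ hχ => (hmem χ hχ).2⟩
  have hφθ : φ.imp θ ∈ L :=
    (hsc _).mpr fun M hM w hw => (hsat M w).mpr ⟨M, hM, w, hw, subset_rfl⟩
  refine ⟨θ, ⟨hθ.1.1, hθ.1.2, hφθ, fun ψ hψP hψQ hφψ => (hsc _).mpr fun M' hM' w' hθw' => ?_⟩, hθ.2⟩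
  obtain ⟨M, hM, w, hw, hTh⟩ := (hsat M' w').mp hθw'
  exact hCl.sat_of_Th_subset hF (fun N hN v => (hsc _).mp hφψ N hN v) hψP hψQ hM hM' hTh hw

theorem ulip_kripke_characterization_general (F : ℕ → Finset ℕ → Finset ℕ → List Formula)
    (hF : IsFamily F) (L : Set Formula) (hL : IsNormal L) :
    (∀ (φ : Formula) (P Q : Finset ℕ), ∃ θ : Formula,
        IsULInterpolant L φ P Q θ ∧ θ.depth ≤ φ.depth) ↔
      ∃ Cl : Set KripkeModel,
        (∀ φ : Formula, φ ∈ L ↔ ∀ M : KripkeModel, M ∈ Cl → ∀ w : M.W, M.Sat φ w) ∧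
        ClassULIP F Cl :=
  ⟨fun hulip => ⟨validModels L, hL.mem_iff_forall_validModels, hL.classULIP_validModels hF hulip⟩,
    fun ⟨_, hsc, hCl⟩ => exists_ulInterpolant_of_classULIP hF hsc hCl⟩

/-- A consistent normal modal logic has uniform Lyndon interpolants of depth bounded by
the depth of the interpolated formula iff it is sound and complete with respect to
some class of Kripke models having ULIP. -/
theorem ulip_kripke_characterization (F : ℕ → Finset ℕ → Finset ℕ → List Formula)
    (hF : IsFamily F) (L : Set Formula) (hL : IsNormal L) (hcons : Formula.bot ∉ L) :
    (∀ (φ : Formula) (P Q : Finset ℕ), ∃ θ : Formula,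
        IsULInterpolant L φ P Q θ ∧ θ.depth ≤ φ.depth) ↔
      ∃ Cl : Set KripkeModel,
        (∀ φ : Formula, φ ∈ L ↔ ∀ M : KripkeModel, M ∈ Cl → ∀ w : M.W, M.Sat φ w) ∧
        ClassULIP F Cl :=
  ulip_kripke_characterization_general F hF L hL
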